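/- arXiv:1812.08415 — 2 statements merged into one kernel-verified Lean document; each statement's English description precedes it below -/
import Mathlib

section
/- With the notation of Lemma 5.8: if μ⁻((a, e]) < ∞, then ϱ_I extends to a function of bounded variation on [a, e]; in particular the limit ϱ_I(a) := lim_{z↓a} ϱ_I(z) exists (possibly equal to 0). -/
/-!
Each atomic factor splits as `(1 - x) / (1 + x) = exp (ℓ (-x) - ℓ x)` with
`ℓ t = log ((1 + t⁺) / (1 - t⁺))` (`posLogRatio`), so on `(a, e]` we get `ϱ = exp (N - P)`, where
`N z = 2 μc⁻((z, e]) + ∑_{y ∈ (z, e]} ℓ (-μ{y})` collects `μ⁻` and `P` collects `μ⁺` in the same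
way (`tailLog`). Both are antitone in `z`, and `N` stays bounded up to `a` because
`μ⁻((a, e]) < ∞`. So `exp N` is bounded and antitone, `exp (-P)` is positive and monotone; each has
a right limit at `a`, and extending both by these limits gives monotone functions on `[a, e]`,
whose product has bounded variation.
-/

open MeasureTheory Set Filter Topology Function

section Extension

variable {α β : Type*} [LinearOrder α] [TopologicalSpace α] [OrderTopology α] [DenselyOrdered α]
  [DecidableEq α] [ConditionallyCompleteLinearOrder β] [TopologicalSpace β] [OrderTopology β]
  {f : α → β} {a e : α}

theorem MonotoneOn.exists_tendsto_nhdsGT_monotoneOn_update (hae : a < e)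
    (hf : MonotoneOn f (Ioc a e)) (hbdd : BddBelow (f '' Ioc a e)) :
    ∃ L, Tendsto f (𝓝[>] a) (𝓝 L) ∧ MonotoneOn (update f a L) (Icc a e) := by
  have hbdd' : BddBelow (f '' Ioo a e) := hbdd.mono (image_mono Ioo_subset_Ioc_self)
  refine ⟨sInf (f '' Ioo a e), (hf.mono Ioo_subset_Ioc_self).tendsto_nhdsWithin_Ioo_right
    (nonempty_Ioo.2 hae) hbdd', ?_⟩
  have hL : ∀ z ∈ Ioc a e, sInf (f '' Ioo a e) ≤ f z := by
    intro z hz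
    obtain ⟨w, haw, hwz⟩ := nonempty_Ioo.2 hz.1
    calc sInf (f '' Ioo a e) ≤ f w := csInf_le hbdd' ⟨w, ⟨haw, hwz.trans_le hz.2⟩, rfl⟩
      _ ≤ f z := hf ⟨haw, hwz.le.trans hz.2⟩ hz hwz.le
  intro x hx y hy hxy
  rcases hx.1.eq_or_lt with rfl | hax
  · rcases hy.1.eq_or_lt with rfl | hay
    · rfl
    · simpa [update_of_ne hay.ne'] using hL y ⟨hay, hy.2⟩
  · have hay := hax.trans_le hxy
    simpa [update_of_ne hax.ne', update_of_ne hay.ne'] using hf ⟨hax, hx.2⟩ ⟨hay, hy.2⟩ hxy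

theorem AntitoneOn.exists_tendsto_nhdsGT_antitoneOn_update (hae : a < e)
    (hf : AntitoneOn f (Ioc a e)) (hbdd : BddAbove (f '' Ioc a e)) :
    ∃ L, Tendsto f (𝓝[>] a) (𝓝 L) ∧ AntitoneOn (update f a L) (Icc a e) :=
  MonotoneOn.exists_tendsto_nhdsGT_monotoneOn_update (β := βᵒᵈ) hae hf.dual_right hbdd

end Extension

theorem MonotoneOn.boundedVariationOn_Icc {α : Type*} [LinearOrder α] {f : α → ℝ} {a b : α}
    (hab : a ≤ b) (hf : MonotoneOn f (Icc a b)) : BoundedVariationOn f (Icc a b) := by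
  simpa using hf.locallyBoundedVariationOn a b (left_mem_Icc.2 hab) (right_mem_Icc.2 hab)

theorem AntitoneOn.boundedVariationOn_Icc {α : Type*} [LinearOrder α] {f : α → ℝ} {a b : α}
    (hab : a ≤ b) (hf : AntitoneOn f (Icc a b)) : BoundedVariationOn f (Icc a b) := by
  simpa [Function.comp_def] using
    LipschitzWith.id.neg.comp_boundedVariationOn (hf.neg.boundedVariationOn_Icc hab)

theorem exists_boundedVariationOn_Icc_of_eqOn_mul {ϱ g h : ℝ → ℝ} {a e : ℝ} (hae : a < e)
    (hg : AntitoneOn g (Ioc a e)) (hgb : BddAbove (g '' Ioc a e))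
    (hh : MonotoneOn h (Ioc a e)) (hhb : BddBelow (h '' Ioc a e))
    (hϱ : EqOn ϱ (g * h) (Ioc a e)) :
    ∃ F : ℝ → ℝ, BoundedVariationOn F (Icc a e) ∧ EqOn F ϱ (Ioc a e) ∧
      Tendsto ϱ (𝓝[>] a) (𝓝 (F a)) := by
  obtain ⟨L, hgL, hg'⟩ := hg.exists_tendsto_nhdsGT_antitoneOn_update hae hgb
  obtain ⟨M, hhM, hh'⟩ := hh.exists_tendsto_nhdsGT_monotoneOn_update hae hhb
  refine ⟨update g a L * update h a M,
    (hg'.boundedVariationOn_Icc hae.le).mul (hh'.boundedVariationOn_Icc hae.le),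
    fun z hz => ?_, ?_⟩
  · simp [update_of_ne hz.1.ne', hϱ hz]
  · simpa using (hgL.mul hhM).congr'
      (eventually_of_mem (Ioc_mem_nhdsGT hae) fun z hz => (hϱ hz).symm)

theorem exists_boundedVariationOn_Icc_of_eqOn_exp_sub {ϱ N P : ℝ → ℝ} {a e : ℝ} (hae : a < e)
    (hN : AntitoneOn N (Icc a e)) (hP : AntitoneOn P (Ioc a e))
    (hϱ : ∀ z ∈ Ioc a e, ϱ z = Real.exp (N z - P z)) :
    ∃ F : ℝ → ℝ, BoundedVariationOn F (Icc a e) ∧ EqOn F ϱ (Ioc a e) ∧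
      Tendsto ϱ (𝓝[>] a) (𝓝 (F a)) := by
  refine exists_boundedVariationOn_Icc_of_eqOn_mul hae (g := fun z => Real.exp (N z))
    (h := fun z => Real.exp (-P z)) ?_ ?_ ?_ ⟨0, forall_mem_image.2 fun z _ => (Real.exp_pos _).le⟩
    fun z hz => by simp [hϱ z hz, sub_eq_add_neg, Real.exp_add]
  · exact fun x hx y hy hxy =>
      Real.exp_le_exp.2 (hN (Ioc_subset_Icc_self hx) (Ioc_subset_Icc_self hy) hxy)
  · exact ⟨_, forall_mem_image.2 fun z hz =>
      Real.exp_le_exp.2 (hN (left_mem_Icc.2 hae.le) (Ioc_subset_Icc_self hz) hz.1.le)⟩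
  · exact fun x hx y hy hxy => Real.exp_le_exp.2 (neg_le_neg (hP hx hy hxy))

noncomputable def posLogRatio (t : ℝ) : ℝ := Real.log (1 + max t 0) - Real.log (1 - max t 0)

theorem posLogRatio_nonneg (t : ℝ) : 0 ≤ posLogRatio t := by
  have hu : 0 ≤ max t 0 := le_max_right _ _
  rw [posLogRatio, sub_nonneg, ← Real.log_abs (1 - _)]
  rcases eq_or_ne (1 - max t 0) 0 with h | h
  · rw [h, abs_zero, Real.log_zero]
    exact Real.log_nonneg (by linarith)
  · exact Real.log_le_log (abs_pos.2 h) (abs_le.2 ⟨by linarith, by linarith⟩)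

theorem posLogRatio_of_nonpos {t : ℝ} (ht : t ≤ 0) : posLogRatio t = 0 := by
  simp [posLogRatio, max_eq_right ht]

theorem exp_posLogRatio_neg_sub_posLogRatio {x : ℝ} (hx : |x| < 1) :
    Real.exp (posLogRatio (-x) - posLogRatio x) = (1 - x) / (1 + x) := by
  obtain ⟨hl, hr⟩ := abs_lt.1 hx
  have hlog : posLogRatio (-x) - posLogRatio x = Real.log (1 - x) - Real.log (1 + x) := by
    rcases le_total x 0 with h | h
    · rw [posLogRatio_of_nonpos h, posLogRatio, max_eq_left (neg_nonneg.2 h)]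
      ring_nf
    · rw [posLogRatio_of_nonpos (neg_nonpos.2 h), posLogRatio, max_eq_left h]
      ring
  rw [hlog, Real.exp_sub, Real.exp_log (by linarith), Real.exp_log (by linarith)]

theorem summable_posLogRatio {ι : Type*} {x : ι → ℝ} (hx : Summable fun i => max (x i) 0) :
    Summable fun i => posLogRatio (x i) := by
  simpa only [posLogRatio, sub_eq_add_neg] using
    (Real.summable_log_one_add_of_summable hx).sub (Real.summable_log_one_add_of_summable hx.neg)

theorem tprod_one_sub_div_one_add {ι : Type*} {x : ι → ℝ} (hx : ∀ i, |x i| < 1)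
    (h₁ : Summable fun i => posLogRatio (-x i)) (h₂ : Summable fun i => posLogRatio (x i)) :
    ∏' i, (1 - x i) / (1 + x i) =
      Real.exp (∑' i, posLogRatio (-x i) - ∑' i, posLogRatio (x i)) := by
  rw [← (h₁.hasSum.sub h₂.hasSum).rexp.tprod_eq]
  exact tprod_congr fun i => (exp_posLogRatio_neg_sub_posLogRatio (hx i)).symm

theorem ne_top_and_summable_posPart_of_eq_add_tsum {Ω : Type*} [MeasurableSpace Ω]
    {ν νc : Measure Ω} {s : Set Ω} {w : Ω → ℝ} (hdec : ν s = νc s + ∑' y : s, ν {(y : Ω)})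
    (hfin : ν s ≠ ⊤) (hw : ∀ y, w y ≤ (ν {y}).toReal) :
    νc s ≠ ⊤ ∧ Summable fun y : s => max (w y) 0 := by
  obtain ⟨hc, hatoms⟩ := ENNReal.add_ne_top.1 (hdec ▸ hfin)
  exact ⟨hc, (ENNReal.summable_toReal hatoms).of_nonneg_of_le (fun _ => le_max_right _ _)
    (fun y => max_le (hw y) ENNReal.toReal_nonneg)⟩

noncomputable def tailLog (ν : Measure ℝ) (w : ℝ → ℝ) (e z : ℝ) : ℝ :=
  2 * (ν (Ioc z e)).toReal + ∑' y : Ioc z e, posLogRatio (w y)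

theorem antitoneOn_tailLog {ν : Measure ℝ} {w : ℝ → ℝ} {e : ℝ} {s : Set ℝ}
    (hfin : ∀ z ∈ s, ν (Ioc z e) ≠ ⊤)
    (hsum : ∀ z ∈ s, Summable fun y : Ioc z e => max (w y) 0) :
    AntitoneOn (tailLog ν w e) s := by
  intro z₁ hz₁ z₂ _ hz
  have hsub : Ioc z₂ e ⊆ Ioc z₁ e := Ioc_subset_Ioc_left hz
  have hmeas : (ν (Ioc z₂ e)).toReal ≤ (ν (Ioc z₁ e)).toReal :=
    ENNReal.toReal_mono (hfin z₁ hz₁) (measure_mono hsub)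
  have hatoms : ∑' y : Ioc z₂ e, posLogRatio (w y) ≤ ∑' y : Ioc z₁ e, posLogRatio (w y) :=
    tsum_comp_le_tsum_of_inj (summable_posLogRatio (hsum z₁ hz₁))
      (fun _ => posLogRatio_nonneg _) (inclusion_injective hsub)
  simp only [tailLog]
  linarith

theorem exp_tailLog_sub_tailLog {pc nc : Measure ℝ} {x : ℝ → ℝ} {z e : ℝ}
    (hx : ∀ y ∈ Ioc z e, |x y| < 1)
    (hn : Summable fun y : Ioc z e => max (-x y) 0)
    (hp : Summable fun y : Ioc z e => max (x y) 0) :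
    Real.exp (tailLog nc (fun y => -x y) e z - tailLog pc x e z) =
      Real.exp (-2 * ((pc (Ioc z e)).toReal - (nc (Ioc z e)).toReal)) *
        ∏' y : Ioc z e, (1 - x y) / (1 + x y) := by
  rw [tprod_one_sub_div_one_add (x := fun y : Ioc z e => x y) (fun y => hx y y.2)
    (summable_posLogRatio hn) (summable_posLogRatio hp), ← Real.exp_add]
  congr 1
  simp only [tailLog]
  ring

theorem varrho_extends_bv_of_neg_part_finite_general
    (a b e : ℝ) (hae : a < e) (heb : e < b)
    (p n : Measure ℝ)
    (hRadon : ∀ K : Set ℝ, IsCompact K → K ⊆ Set.Ioo a b → p K + n K < ⊤)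
    (μa : ℝ → ℝ) (hμa : ∀ z : ℝ, μa z = (p {z}).toReal - (n {z}).toReal)
    (hatom : ∀ z ∈ Set.Ioo a b, |μa z| < 1)
    (pc nc : Measure ℝ)
    (hpdec : ∀ s : Set ℝ, MeasurableSet s → s ⊆ Set.Ioo a b →
      p s = pc s + ∑' z : s, p {(z : ℝ)})
    (hndec : ∀ s : Set ℝ, MeasurableSet s → s ⊆ Set.Ioo a b →
      n s = nc s + ∑' z : s, n {(z : ℝ)})
    (μcI : ℝ → ℝ → ℝ)
    (hμcI : ∀ u v : ℝ, μcI u v = (pc (Set.Ioc u v)).toReal - (nc (Set.Ioc u v)).toReal)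
    (ϱ : ℝ → ℝ)
    (hϱ₁ : ∀ z : ℝ, e ≤ z → z < b → ϱ z =
      Real.exp (2 * μcI e z) * ∏' y : Set.Ioc e z, (1 + μa (y : ℝ)) / (1 - μa (y : ℝ)))
    (hϱ₂ : ∀ z : ℝ, a < z → z < e → ϱ z =
      Real.exp (-2 * μcI z e) * ∏' y : Set.Ioc z e, (1 - μa (y : ℝ)) / (1 + μa (y : ℝ)))
    (hn_fin : n (Set.Ioc a e) < ⊤) :
    ∃ F : ℝ → ℝ, BoundedVariationOn F (Set.Icc a e) ∧
      (∀ z ∈ Set.Ioc a e, F z = ϱ z) ∧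
      Tendsto ϱ (nhdsWithin a (Set.Ioi a)) (nhds (F a)) := by
  have hsub : ∀ z, a ≤ z → Ioc z e ⊆ Ioo a b := fun z hz y hy =>
    ⟨hz.trans_lt hy.1, hy.2.trans_lt heb⟩
  have hp : ∀ z ∈ Ioc a e, pc (Ioc z e) ≠ ⊤ ∧ Summable fun y : Ioc z e => max (μa y) 0 := by
    intro z hz
    have hK : Icc z e ⊆ Ioo a b := fun y hy => ⟨hz.1.trans_le hy.1, hy.2.trans_lt heb⟩
    refine ne_top_and_summable_posPart_of_eq_add_tsum (w := μa)
      (hpdec _ measurableSet_Ioc (hsub z hz.1.le)) ?_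
      fun y => by rw [hμa]; exact sub_le_self _ ENNReal.toReal_nonneg
    exact ((measure_mono Ioc_subset_Icc_self).trans_lt
      (le_self_add.trans_lt (hRadon _ isCompact_Icc hK))).ne
  have hn : ∀ z ∈ Icc a e, nc (Ioc z e) ≠ ⊤ ∧ Summable fun y : Ioc z e => max (-μa y) 0 :=
    fun z hz => ne_top_and_summable_posPart_of_eq_add_tsum (w := fun y => -μa y)
      (hndec _ measurableSet_Ioc (hsub z hz.1))
      ((measure_mono (Ioc_subset_Ioc_left hz.1)).trans_lt hn_fin).ne
      fun y => by rw [hμa, neg_sub]; exact sub_le_self _ ENNReal.toReal_nonneg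
  have hN : AntitoneOn (tailLog nc (fun y => -μa y) e) (Icc a e) :=
    antitoneOn_tailLog (fun z hz => (hn z hz).1) fun z hz => (hn z hz).2
  have hP : AntitoneOn (tailLog pc μa e) (Ioc a e) :=
    antitoneOn_tailLog (fun z hz => (hp z hz).1) fun z hz => (hp z hz).2
  refine exists_boundedVariationOn_Icc_of_eqOn_exp_sub hae hN hP fun z hz => ?_
  rcases hz.2.eq_or_lt with rfl | hze
  · simp [hϱ₁ _ le_rfl heb, hμcI, tailLog]
  · rw [hϱ₂ z hz.1 hze, hμcI, exp_tailLog_sub_tailLog (fun y hy => hatom y (hsub z hz.1.le hy))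
      (hn z (Ioc_subset_Icc_self hz)).2 (hp z hz).2]

/-- With the notation of Lemma 5.8: if `μ⁻((a,e]) < ∞`, then `ϱ` extends to a function of
bounded variation on `[a,e]`; in particular the limit `ϱ(a) = lim_{z↓a} ϱ(z)` exists
(possibly equal to `0`). -/
theorem varrho_extends_bv_of_neg_part_finite
    (a b e : ℝ) (hae : a < e) (heb : e < b)
    (p n : Measure ℝ) (hsing : p.MutuallySingular n)
    (hRadon : ∀ K : Set ℝ, IsCompact K → K ⊆ Set.Ioo a b → p K + n K < ⊤)
    (μa : ℝ → ℝ) (hμa : ∀ z : ℝ, μa z = (p {z}).toReal - (n {z}).toReal)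
    (hatom : ∀ z ∈ Set.Ioo a b, |μa z| < 1)
    (pc nc : Measure ℝ) (hpc : ∀ z : ℝ, pc {z} = 0) (hnc : ∀ z : ℝ, nc {z} = 0)
    (hpdec : ∀ s : Set ℝ, MeasurableSet s → s ⊆ Set.Ioo a b →
      p s = pc s + ∑' z : s, p {(z : ℝ)})
    (hndec : ∀ s : Set ℝ, MeasurableSet s → s ⊆ Set.Ioo a b →
      n s = nc s + ∑' z : s, n {(z : ℝ)})
    (μcI : ℝ → ℝ → ℝ)
    (hμcI : ∀ u v : ℝ, μcI u v = (pc (Set.Ioc u v)).toReal - (nc (Set.Ioc u v)).toReal)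
    (ϱ : ℝ → ℝ)
    (hϱ₁ : ∀ z : ℝ, e ≤ z → z < b → ϱ z =
      Real.exp (2 * μcI e z) * ∏' y : Set.Ioc e z, (1 + μa (y : ℝ)) / (1 - μa (y : ℝ)))
    (hϱ₂ : ∀ z : ℝ, a < z → z < e → ϱ z =
      Real.exp (-2 * μcI z e) * ∏' y : Set.Ioc z e, (1 - μa (y : ℝ)) / (1 + μa (y : ℝ)))
    (hn_fin : n (Set.Ioc a e) < ⊤) :
    ∃ F : ℝ → ℝ, BoundedVariationOn F (Set.Icc a e) ∧
      (∀ z ∈ Set.Ioc a e, F z = ϱ z) ∧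
      Tendsto ϱ (nhdsWithin a (Set.Ioi a)) (nhds (F a)) :=
  varrho_extends_bv_of_neg_part_finite_general a b e hae heb p n hRadon μa hμa hatom pc nc hpdec
    hndec μcI hμcI ϱ hϱ₁ hϱ₂ hn_fin
end

section
/- Let ρ ∈ L¹_loc(ℝ) be positive, and let s : I → ℝ be the function s(x) = ∫_e^x 1/ρ(y) dy on an open interval I on which 1/ρ ∈ L¹_loc and ρ > 0 a.e., so that s is absolutely continuous and strictly increasing. Let t = s⁻¹ : J → I where J = s(I). Then t is absolutely continuous on J and t'(y) = ρ(t(y)) for a.e. y ∈ J. -/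
open MeasureTheory Set Filter

/-!
Since `s' = 1/ρ` a.e. and `s` is the integral of its derivative, the change of variables
`y = s x` applies on every compact subinterval `[x₁, x₂]`: up to a null set, `s` maps a
measurable full-measure subset of `[x₁, x₂]` onto `[s x₁, s x₂]`, so
`∫_{s x₁}^{s x₂} ρ (t y) dy = ∫_{x₁}^{x₂} (1/ρ x) ρ x dx = x₂ - x₁`.
-/

lemma exists_measurableSet_subset_ae_eq_of_ae_restrict {α : Type*} [MeasurableSpace α]
    {μ : Measure α} {s : Set α} {p : α → Prop} (hs : MeasurableSet s)
    (h : ∀ᵐ x ∂μ.restrict s, p x) :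
    ∃ t ⊆ s, MeasurableSet t ∧ t =ᵐ[μ] s ∧ ∀ x ∈ t, p x := by
  obtain ⟨u, hu, hum, hpu⟩ := ((ae_restrict_iff' hs).1 h).exists_measurable_mem
  refine ⟨s ∩ u, inter_subset_left, hs.inter hum, ?_, fun x hx => hpu x hx.2 hx.1⟩
  simpa using (ae_eq_refl s).inter (ae_eq_univ.2 (mem_ae_iff.1 hu))

section Primitive

variable {E : Type*} [NormedAddCommGroup E] {g : ℝ → E} {a b e x₁ x₂ : ℝ}

lemma MeasureTheory.LocallyIntegrableOn.intervalIntegrable_of_mem_Ioo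
    (hg : LocallyIntegrableOn g (Ioo a b)) (hx₁ : x₁ ∈ Ioo a b) (hx₂ : x₂ ∈ Ioo a b) :
    IntervalIntegrable g volume x₁ x₂ :=
  (hg.integrableOn_compact_subset (ordConnected_Ioo.uIcc_subset hx₁ hx₂)
    isCompact_uIcc).intervalIntegrable

variable [NormedSpace ℝ E] [CompleteSpace E]

lemma MeasureTheory.LocallyIntegrableOn.ae_hasDerivAt_integral_of_mem_Ioo
    (hg : LocallyIntegrableOn g (Ioo a b)) (he : e ∈ Ioo a b) (hx₁ : x₁ ∈ Ioo a b)
    (hx₂ : x₂ ∈ Ioo a b) :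
    ∀ᵐ x ∂volume.restrict (Icc x₁ x₂),
      HasDerivAt (fun x => ∫ y in e..x, g y) (g x) x := by
  have hc : min e x₁ ∈ Ioo a b := ⟨lt_min he.1 hx₁.1, (min_le_left _ _).trans_lt he.2⟩
  have hd : max e x₂ ∈ Ioo a b := ⟨he.1.trans_le (le_max_left _ _), max_lt he.2 hx₂.2⟩
  rw [ae_restrict_iff' measurableSet_Icc]
  filter_upwards [(hg.intervalIntegrable_of_mem_Ioo hc hd).ae_hasDerivAt_integral] with x hx hxI
  exact hx
    (mem_uIcc.2 (Or.inl ⟨(min_le_right _ _).trans hxI.1, hxI.2.trans (le_max_right _ _)⟩)) e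
    (mem_uIcc.2 (Or.inl ⟨min_le_left _ _, le_max_left _ _⟩))

end Primitive

section ChangeOfVariables

variable {E : Type*} [NormedAddCommGroup E] [NormedSpace ℝ E] {f f' : ℝ → ℝ} {a b : ℝ}

lemma MonotoneOn.ae_restrict_deriv_nonneg (hf : MonotoneOn f (Icc a b))
    (hf' : ∀ᵐ x ∂volume.restrict (Icc a b), HasDerivWithinAt f (f' x) (Icc a b) x) :
    ∀ᵐ x ∂volume.restrict (Icc a b), 0 ≤ f' x := by
  rw [← Measure.restrict_congr_set Ioo_ae_eq_Icc] at hf' ⊢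
  filter_upwards [hf', ae_restrict_mem measurableSet_Ioo] with x hd hx
  exact hd.nonneg_of_monotoneOn
    (uniqueDiffOn_Icc (hx.1.trans hx.2) x (Ioo_subset_Icc_self hx)).accPt hf

/-- Injectivity is what makes `f '' A` measurable (Lusin–Souslin). -/
theorem StrictMonoOn.exists_image_ae_eq_Icc (hab : a ≤ b) (hf : StrictMonoOn f (Icc a b))
    (hf' : ∀ᵐ x ∂volume.restrict (Icc a b), HasDerivWithinAt f (f' x) (Icc a b) x)
    (hint : IntegrableOn f' (Icc a b)) (hftc : ∫ x in a..b, f' x = f b - f a) :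
    ∃ A ⊆ Icc a b, MeasurableSet A ∧ A =ᵐ[volume] Icc a b ∧
      (∀ x ∈ A, HasDerivWithinAt f (f' x) A x) ∧ f '' A =ᵐ[volume] Icc (f a) (f b) := by
  obtain ⟨A, hAI, hAm, hAae, hA⟩ :=
    exists_measurableSet_subset_ae_eq_of_ae_restrict measurableSet_Icc hf'
  have hA' : ∀ x ∈ A, HasDerivWithinAt f (f' x) A x := fun x hx => (hA x hx).mono hAI
  have hmeas : MeasurableSet (f '' A) :=
    hAm.image_of_continuousOn_injOn (fun x hx => (hA' x hx).continuousWithinAt)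
      (hf.injOn.mono hAI)
  have hsub : f '' A ⊆ Icc (f a) (f b) := by
    rintro _ ⟨x, hx, rfl⟩
    exact ⟨hf.monotoneOn ⟨le_rfl, hab⟩ (hAI hx) (hAI hx).1,
      hf.monotoneOn (hAI hx) ⟨hab, le_rfl⟩ (hAI hx).2⟩
  have hvol : volume (Icc (f a) (f b)) = volume (f '' A) :=
    calc volume (Icc (f a) (f b)) = ENNReal.ofReal (∫ x in Icc a b, f' x) := by
          rw [Real.volume_Icc, integral_Icc_eq_integral_Ioc,
            ← intervalIntegral.integral_of_le hab, hftc]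
      _ = ∫⁻ x in Icc a b, ENNReal.ofReal (f' x) :=
          ofReal_integral_eq_lintegral_ofReal hint (hf.monotoneOn.ae_restrict_deriv_nonneg hf')
      _ = ∫⁻ x in A, ENNReal.ofReal (f' x) := setLIntegral_congr hAae.symm
      _ = volume (f '' A) :=
          lintegral_deriv_eq_volume_image_of_monotoneOn hAm hA' (hf.monotoneOn.mono hAI)
  exact ⟨A, hAI, hAm, hAae, hA',
    ae_eq_of_subset_of_measure_ge hsub hvol.le hmeas.nullMeasurableSet measure_Icc_lt_top.ne⟩

theorem StrictMonoOn.integrableOn_Icc_iff_integrableOn_deriv_smul (hab : a ≤ b)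
    (hf : StrictMonoOn f (Icc a b))
    (hf' : ∀ᵐ x ∂volume.restrict (Icc a b), HasDerivWithinAt f (f' x) (Icc a b) x)
    (hint : IntegrableOn f' (Icc a b)) (hftc : ∫ x in a..b, f' x = f b - f a) (g : ℝ → E) :
    IntegrableOn g (Icc (f a) (f b)) ↔ IntegrableOn (fun x => f' x • g (f x)) (Icc a b) := by
  obtain ⟨A, hAI, hAm, hAae, hA, himage⟩ := hf.exists_image_ae_eq_Icc hab hf' hint hftc
  rw [← integrableOn_congr_set_ae himage, ← integrableOn_congr_set_ae hAae]
  exact integrableOn_image_iff_integrableOn_deriv_smul_of_monotoneOn hAm hA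
    (hf.monotoneOn.mono hAI) g

theorem StrictMonoOn.integral_Icc_eq_integral_deriv_smul (hab : a ≤ b)
    (hf : StrictMonoOn f (Icc a b))
    (hf' : ∀ᵐ x ∂volume.restrict (Icc a b), HasDerivWithinAt f (f' x) (Icc a b) x)
    (hint : IntegrableOn f' (Icc a b)) (hftc : ∫ x in a..b, f' x = f b - f a) (g : ℝ → E) :
    ∫ y in Icc (f a) (f b), g y = ∫ x in Icc a b, f' x • g (f x) := by
  obtain ⟨A, hAI, hAm, hAae, hA, himage⟩ := hf.exists_image_ae_eq_Icc hab hf' hint hftc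
  rw [← setIntegral_congr_set himage, ← setIntegral_congr_set hAae]
  exact integral_image_eq_integral_deriv_smul_of_monotoneOn hAm hA (hf.monotoneOn.mono hAI) g

end ChangeOfVariables

theorem inverse_scale_absolutely_continuous_general
    (a b e : ℝ) (hae : a < e) (heb : e < b) (ρ : ℝ → ℝ)
    (hρpos : ∀ᵐ x ∂(volume.restrict (Set.Ioo a b)), 0 < ρ x)
    (hinv : ∀ K : Set ℝ, IsCompact K → K ⊆ Set.Ioo a b →
      IntegrableOn (fun y => (ρ y)⁻¹) K volume)
    (s t : ℝ → ℝ)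
    (hs : ∀ x ∈ Set.Ioo a b, s x = ∫ y in e..x, (ρ y)⁻¹)
    (hmono : StrictMonoOn s (Set.Ioo a b))
    (ht : ∀ x ∈ Set.Ioo a b, t (s x) = x) :
    ∀ y₁ ∈ s '' Set.Ioo a b, ∀ y₂ ∈ s '' Set.Ioo a b, y₁ ≤ y₂ →
      IntegrableOn (fun y => ρ (t y)) (Set.Icc y₁ y₂) volume ∧
      (∫ y in y₁..y₂, ρ (t y)) = t y₂ - t y₁ := by
  have hloc : LocallyIntegrableOn (fun y => (ρ y)⁻¹) (Ioo a b) :=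
    (locallyIntegrableOn_iff isOpen_Ioo.isLocallyClosed).2 fun K hK hKc => hinv K hKc hK
  have he : e ∈ Ioo a b := ⟨hae, heb⟩
  rintro _ ⟨x₁, hx₁, rfl⟩ _ ⟨x₂, hx₂, rfl⟩ hy
  have hx : x₁ ≤ x₂ := (hmono.le_iff_le hx₁ hx₂).1 hy
  have hsub : Icc x₁ x₂ ⊆ Ioo a b := ordConnected_Ioo.out hx₁ hx₂
  have hderiv : ∀ᵐ x ∂volume.restrict (Icc x₁ x₂),
      HasDerivWithinAt s (ρ x)⁻¹ (Icc x₁ x₂) x := by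
    filter_upwards [hloc.ae_hasDerivAt_integral_of_mem_Ioo he hx₁ hx₂,
      ae_restrict_mem measurableSet_Icc] with x hx hxI
    exact hx.hasDerivWithinAt.congr (fun y hy => hs y (hsub hy)) (hs x (hsub hxI))
  have hftc : ∫ x in x₁..x₂, (ρ x)⁻¹ = s x₂ - s x₁ := by
    rw [hs x₂ hx₂, hs x₁ hx₁, intervalIntegral.integral_interval_sub_left
      (hloc.intervalIntegrable_of_mem_Ioo he hx₂) (hloc.intervalIntegrable_of_mem_Ioo he hx₁)]
  have hone :
      (fun x => (ρ x)⁻¹ • ρ (t (s x))) =ᵐ[volume.restrict (Icc x₁ x₂)] fun _ => 1 := by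
    filter_upwards [ae_restrict_of_ae_restrict_of_subset hsub hρpos,
      ae_restrict_mem measurableSet_Icc] with x hρx hx
    rw [ht x (hsub hx), smul_eq_mul, inv_mul_cancel₀ hρx.ne']
  have hf : StrictMonoOn s (Icc x₁ x₂) := hmono.mono hsub
  have hint := hloc.integrableOn_compact_subset hsub isCompact_Icc
  refine ⟨(hf.integrableOn_Icc_iff_integrableOn_deriv_smul hx hderiv hint hftc _).2
    ((integrableOn_const measure_Icc_lt_top.ne).congr hone.symm), ?_⟩
  rw [intervalIntegral.integral_of_le hy, ← integral_Icc_eq_integral_Ioc,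
    hf.integral_Icc_eq_integral_deriv_smul hx hderiv hint hftc, integral_congr_ae hone,
    ht x₁ hx₁, ht x₂ hx₂]
  simp [hx]

/-- Let `ρ ∈ L¹_loc(ℝ)` be positive a.e. on the open interval `I = (a,b)` with
`1/ρ ∈ L¹_loc(I)`, let `s(x) = ∫_e^x 1/ρ(y) dy` be the (strictly increasing, absolutely
continuous) scale function and `t = s⁻¹` on `J = s(I)`. Then `t` is absolutely continuous
on `J` with `t'(y) = ρ(t(y))` for a.e. `y`, i.e. `ρ ∘ t` is locally integrable on `J` and
`t(y₂) - t(y₁) = ∫_{y₁}^{y₂} ρ(t(y)) dy`. -/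
theorem inverse_scale_absolutely_continuous
    (a b e : ℝ) (hae : a < e) (heb : e < b) (ρ : ℝ → ℝ)
    (hρloc : LocallyIntegrable ρ volume)
    (hρpos : ∀ᵐ x ∂(volume.restrict (Set.Ioo a b)), 0 < ρ x)
    (hinv : ∀ K : Set ℝ, IsCompact K → K ⊆ Set.Ioo a b →
      IntegrableOn (fun y => (ρ y)⁻¹) K volume)
    (s t : ℝ → ℝ)
    (hs : ∀ x ∈ Set.Ioo a b, s x = ∫ y in e..x, (ρ y)⁻¹)
    (hmono : StrictMonoOn s (Set.Ioo a b))
    (ht : ∀ x ∈ Set.Ioo a b, t (s x) = x) :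
    ∀ y₁ ∈ s '' Set.Ioo a b, ∀ y₂ ∈ s '' Set.Ioo a b, y₁ ≤ y₂ →
      IntegrableOn (fun y => ρ (t y)) (Set.Icc y₁ y₂) volume ∧
      (∫ y in y₁..y₂, ρ (t y)) = t y₂ - t y₁ :=
  inverse_scale_absolutely_continuous_general a b e hae heb ρ hρpos hinv s t hs hmono ht
end
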